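/- arXiv:2311.07440 — 2 statements merged into one kernel-verified Lean document; each statement's English description precedes it below -/
import Mathlib

section
/- For the harmonic functions u_n(z) = z^{n−1} on ℂ and radii 0 < r1 < r2 < r3, equality holds in the three-ball inequality: ‖u_n‖_{L²(B(r2))} = ‖u_n‖_{L²(B(r1))}^α · ‖u_n‖_{L²(B(r3))}^{1−α}, where α = (log r3 − log r2)/(log r3 − log r1). -/
/-! For `u(z) = z ^ k` the integrand `‖u‖ ^ 2` is homogeneous, so scaling `z ↦ r • z` gives
`‖u‖_{L²(B(r))} = C r ^ (k + 1)` with `C > 0`. Hence `log ‖u‖_{L²(B(r))}` is affine in `log r`,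
and `α` is precisely the weight with `log r2 = α log r1 + (1 - α) log r3`. -/

open Real MeasureTheory Metric Module

theorem setIntegral_ball_eq_of_homogeneous {E : Type*} [NormedAddCommGroup E] [NormedSpace ℝ E]
    [FiniteDimensional ℝ E] [MeasurableSpace E] [BorelSpace E] (μ : Measure E)
    [μ.IsAddHaarMeasure] {f : E → ℝ} {k : ℕ} {r : ℝ} (hr : 0 < r)
    (hf : ∀ x, f (r • x) = r ^ k * f x) :
    ∫ x in ball 0 r, f x ∂μ = r ^ (k + finrank ℝ E) * ∫ x in ball 0 1, f x ∂μ := by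
  have h := Measure.setIntegral_comp_smul_of_pos μ f (ball 0 1) hr
  rw [smul_unitBall_of_pos hr, smul_eq_mul] at h
  simp only [hf, integral_const_mul] at h
  have hrd : r ^ finrank ℝ E ≠ 0 := by positivity
  rw [pow_add, mul_comm (r ^ k), mul_assoc, h]
  field_simp

theorem setIntegral_pos_of_continuous_nonneg {X : Type*} [TopologicalSpace X] [MeasurableSpace X]
    [OpensMeasurableSpace X] {μ : Measure X} [μ.IsOpenPosMeasure] {f : X → ℝ} {s : Set X}
    {x : X} (hs : IsOpen s) (hf : Continuous f) (hf0 : 0 ≤ f) (hfi : IntegrableOn f s μ)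
    (hx : x ∈ s) (hfx : f x ≠ 0) : 0 < ∫ x in s, f x ∂μ :=
  (setIntegral_pos_iff_support_of_nonneg_ae (.of_forall hf0) hfi).2
    ((hf.isOpen_support.inter hs).measure_pos μ ⟨x, hfx, hx⟩)

theorem log_interpolation_rpow {c p r₁ r₂ r₃ : ℝ} (hc : 0 < c) (h₁ : 0 < r₁) (h₂ : 0 < r₂)
    (h₃ : 0 < r₃) (h₁₃ : r₁ ≠ r₃) :
    c * r₂ ^ p = (c * r₁ ^ p) ^ ((log r₃ - log r₂) / (log r₃ - log r₁)) *
      (c * r₃ ^ p) ^ (1 - (log r₃ - log r₂) / (log r₃ - log r₁)) := by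
  have hlog : log r₃ - log r₁ ≠ 0 :=
    sub_ne_zero.2 fun h ↦ h₁₃ (log_injOn_pos h₃ h₁ h).symm
  have hA := mul_pos hc (rpow_pos_of_pos h₁ p)
  have hB := mul_pos hc (rpow_pos_of_pos h₃ p)
  refine log_injOn_pos (mul_pos hc (rpow_pos_of_pos h₂ p))
    (mul_pos (rpow_pos_of_pos hA _) (rpow_pos_of_pos hB _)) ?_
  rw [log_mul (rpow_pos_of_pos hA _).ne' (rpow_pos_of_pos hB _).ne', log_rpow hA, log_rpow hB,
    log_mul hc.ne' (rpow_pos_of_pos h₂ p).ne', log_mul hc.ne' (rpow_pos_of_pos h₁ p).ne',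
    log_mul hc.ne' (rpow_pos_of_pos h₃ p).ne', log_rpow h₁, log_rpow h₂, log_rpow h₃]
  field_simp
  ring

theorem norm_smul_pow_sq (n : ℕ) {r : ℝ} (hr : 0 ≤ r) (z : ℂ) :
    ‖(r • z) ^ n‖ ^ 2 = r ^ (2 * n) * ‖z ^ n‖ ^ 2 := by
  rw [Complex.real_smul, mul_pow, norm_mul, norm_pow, Complex.norm_real, norm_of_nonneg hr]
  ring

theorem integral_unitBall_norm_pow_sq_pos (n : ℕ) :
    0 < ∫ z in ball (0 : ℂ) 1, ‖z ^ n‖ ^ 2 := by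
  have hcont : Continuous fun z : ℂ ↦ ‖z ^ n‖ ^ 2 := by fun_prop
  refine setIntegral_pos_of_continuous_nonneg (x := 1 / 2) isOpen_ball hcont
    (fun _ ↦ by positivity)
    ((hcont.continuousOn.integrableOn_compact (isCompact_closedBall 0 1)).mono_set
      ball_subset_closedBall) (by norm_num) (by simp)

theorem sqrt_integral_ball_norm_pow_sq (n : ℕ) {r : ℝ} (hr : 0 < r) :
    (∫ z in ball (0 : ℂ) r, ‖z ^ n‖ ^ 2) ^ ((1 : ℝ) / 2) =
      (∫ z in ball (0 : ℂ) 1, ‖z ^ n‖ ^ 2) ^ ((1 : ℝ) / 2) * r ^ ((n + 1 : ℕ) : ℝ) := by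
  have hsqrt : ((r ^ (n + 1)) ^ 2) ^ ((1 : ℝ) / 2) = r ^ (n + 1) := by
    simpa using pow_rpow_inv_natCast (pow_nonneg hr.le (n + 1)) two_ne_zero
  rw [setIntegral_ball_eq_of_homogeneous volume hr (norm_smul_pow_sq n hr.le),
    Complex.finrank_real_complex, show 2 * n + 2 = (n + 1) * 2 by ring, pow_mul,
    mul_rpow (by positivity) (integral_unitBall_norm_pow_sq_pos n).le, hsqrt, rpow_natCast,
    mul_comm]

theorem stmt_4_general (n : ℕ) (r1 r2 r3 : ℝ)
    (h1 : 0 < r1) (h2 : r1 < r2) (h3 : r2 < r3) :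
    (∫ z in Metric.ball (0 : ℂ) r2, ‖z ^ (n - 1)‖ ^ 2) ^ ((1 : ℝ) / 2)
      = ((∫ z in Metric.ball (0 : ℂ) r1, ‖z ^ (n - 1)‖ ^ 2) ^ ((1 : ℝ) / 2))
          ^ ((Real.log r3 - Real.log r2) / (Real.log r3 - Real.log r1)) *
        ((∫ z in Metric.ball (0 : ℂ) r3, ‖z ^ (n - 1)‖ ^ 2) ^ ((1 : ℝ) / 2))
          ^ (1 - (Real.log r3 - Real.log r2) / (Real.log r3 - Real.log r1)) := by
  have hr2 : 0 < r2 := h1.trans h2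
  have hr3 : 0 < r3 := hr2.trans h3
  rw [sqrt_integral_ball_norm_pow_sq _ h1, sqrt_integral_ball_norm_pow_sq _ hr2,
    sqrt_integral_ball_norm_pow_sq _ hr3]
  exact log_interpolation_rpow (rpow_pos_of_pos (integral_unitBall_norm_pow_sq_pos _) _)
    h1 hr2 hr3 (h2.trans h3).ne

/-- For the harmonic functions `u_n(z) = z^(n−1)` on `ℂ` and radii
`0 < r1 < r2 < r3`, equality holds in the three-ball inequality with exponent
`α = (log r3 − log r2)/(log r3 − log r1)`. -/
theorem stmt_4 (n : ℕ) (hn : 1 ≤ n) (r1 r2 r3 : ℝ)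
    (h1 : 0 < r1) (h2 : r1 < r2) (h3 : r2 < r3) :
    (∫ z in Metric.ball (0 : ℂ) r2, ‖z ^ (n - 1)‖ ^ 2) ^ ((1 : ℝ) / 2)
      = ((∫ z in Metric.ball (0 : ℂ) r1, ‖z ^ (n - 1)‖ ^ 2) ^ ((1 : ℝ) / 2))
          ^ ((Real.log r3 - Real.log r2) / (Real.log r3 - Real.log r1)) *
        ((∫ z in Metric.ball (0 : ℂ) r3, ‖z ^ (n - 1)‖ ^ 2) ^ ((1 : ℝ) / 2))
          ^ (1 - (Real.log r3 - Real.log r2) / (Real.log r3 - Real.log r1)) :=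
  stmt_4_general n r1 r2 r3 h1 h2 h3
end

section
/- Let 0 < r1 < r2 < r3 and α = (log r3 − log r2)/(log r3 − log r1). There is no constant C > 0 and exponent α̃ > α such that for all n ∈ ℕ, n ≥ 1, the functions u_n(z) = z^{n−1} satisfy ‖u_n‖_{L²(B(r2))} ≤ C · ‖u_n‖_{L²(B(r1))}^{α̃} · ‖u_n‖_{L²(B(r3))}^{1−α̃}. -/
/-!
By polar coordinates `‖z ^ k‖_{L²(B(ρ))} = √(π / (k + 1)) ρ ^ (k + 1)`, so for `n = k + 1`
the three-ball inequality collapses to `r2 ^ n ≤ C q ^ n` with `q = r1 ^ α' * r3 ^ (1 - α')`.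
Taking logarithms, `α' > α` is exactly `q < r2`, and then `(r2 / q) ^ n → ∞` beats `C`.
-/

open Real MeasureTheory

theorem integral_norm_pow_sq_ball {ρ : ℝ} (hρ : 0 ≤ ρ) (k : ℕ) :
    ∫ z in Metric.ball (0 : ℂ) ρ, ‖z ^ k‖ ^ 2 = π / (k + 1) * ρ ^ (2 * k + 2) := by
  have hradial : ∫ z in Metric.ball (0 : ℂ) ρ, ‖z ^ k‖ ^ 2
      = ∫ z : ℂ, (Set.Iio ρ).indicator (fun r => r ^ (2 * k)) ‖z‖ := by
    rw [← integral_indicator measurableSet_ball]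
    congr 1 with z
    simp [Set.indicator, norm_pow, ← pow_mul, mul_comm]
  have hpolar :
      ∫ r in Set.Ioi (0 : ℝ), r ^ (2 - 1) • (Set.Iio ρ).indicator (fun r => r ^ (2 * k)) r
        = ∫ r in (0 : ℝ)..ρ, r ^ (2 * k + 1) := by
    rw [intervalIntegral.integral_of_le hρ, integral_Ioc_eq_integral_Ioo, ← Set.Ioi_inter_Iio,
      ← integral_indicator (measurableSet_Ioi.inter measurableSet_Iio),
      ← integral_indicator measurableSet_Ioi]
    congr 1 with r
    by_cases h0 : r ∈ Set.Ioi (0 : ℝ) <;> by_cases hρr : r ∈ Set.Iio ρ <;>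
      simp [Set.indicator, h0, hρr, pow_succ, mul_comm]
  rw [hradial, integral_fun_norm_addHaar volume, Complex.finrank_real_complex, hpolar,
    integral_pow, measureReal_def, Complex.volume_ball]
  simp only [ENNReal.ofReal_one, one_pow, one_mul, ENNReal.coe_toReal, NNReal.coe_real_pi,
    smul_eq_mul, nsmul_eq_mul]
  push_cast
  field_simp
  ring

theorem integral_norm_pow_sq_ball_rpow_half {ρ : ℝ} (hρ : 0 ≤ ρ) (k : ℕ) :
    (∫ z in Metric.ball (0 : ℂ) ρ, ‖z ^ k‖ ^ 2) ^ ((1 : ℝ) / 2)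
      = √(π / (k + 1)) * ρ ^ (k + 1) := by
  rw [integral_norm_pow_sq_ball hρ, ← sqrt_eq_rpow, sqrt_mul (by positivity),
    show 2 * k + 2 = (k + 1) * 2 by ring, pow_mul, sqrt_sq (by positivity)]

theorem rpow_mul_pow_mul_rpow_one_sub {c x y : ℝ} (hc : 0 ≤ c) (hx : 0 ≤ x) (hy : 0 ≤ y)
    (a : ℝ) (n : ℕ) :
    (c * x ^ n) ^ a * (c * y ^ n) ^ (1 - a) = c * (x ^ a * y ^ (1 - a)) ^ n := by
  rw [mul_rpow hc (by positivity), mul_rpow hc (by positivity), mul_pow,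
    rpow_pow_comm hx, rpow_pow_comm hy]
  calc c ^ a * (x ^ n) ^ a * (c ^ (1 - a) * (y ^ n) ^ (1 - a))
      = c ^ (a + (1 - a)) * ((x ^ n) ^ a * (y ^ n) ^ (1 - a)) := by
        rw [rpow_add' hc (by norm_num)]; ring
    _ = _ := by norm_num

theorem rpow_mul_rpow_one_sub_lt {r1 r2 r3 a : ℝ} (h1 : 0 < r1) (h2 : r1 < r2) (h3 : r2 < r3)
    (ha : (log r3 - log r2) / (log r3 - log r1) < a) :
    r1 ^ a * r3 ^ (1 - a) < r2 := by
  have hr3 : 0 < r3 := by linarith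
  have hlog : 0 < log r3 - log r1 := sub_pos.2 (log_lt_log h1 (h2.trans h3))
  rw [← exp_log (by positivity : 0 < r1 ^ a * r3 ^ (1 - a)), ← exp_log (h1.trans h2),
    exp_lt_exp, log_mul (by positivity) (by positivity), log_rpow h1, log_rpow hr3]
  linarith [(div_lt_iff₀ hlog).mp ha]

open Filter in
/-- Sharpness of the three-ball exponent: there is no `C > 0` and
`α̃ > α = (log r3 − log r2)/(log r3 − log r1)` such that for all `n ≥ 1` the
functions `u_n(z) = z^(n−1)` satisfy
`‖u_n‖_{L²(B(r2))} ≤ C ‖u_n‖_{L²(B(r1))}^α̃ ‖u_n‖_{L²(B(r3))}^(1−α̃)`. -/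
theorem stmt_5 (r1 r2 r3 : ℝ) (h1 : 0 < r1) (h2 : r1 < r2) (h3 : r2 < r3) :
    ¬ ∃ C : ℝ, 0 < C ∧ ∃ α' : ℝ,
      (Real.log r3 - Real.log r2) / (Real.log r3 - Real.log r1) < α' ∧
      ∀ n : ℕ, 1 ≤ n →
        (∫ z in Metric.ball (0 : ℂ) r2, ‖z ^ (n - 1)‖ ^ 2) ^ ((1 : ℝ) / 2)
          ≤ C *
            ((∫ z in Metric.ball (0 : ℂ) r1, ‖z ^ (n - 1)‖ ^ 2) ^ ((1 : ℝ) / 2)) ^ α' *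
            ((∫ z in Metric.ball (0 : ℂ) r3, ‖z ^ (n - 1)‖ ^ 2) ^ ((1 : ℝ) / 2)) ^ (1 - α') := by
  rintro ⟨C, -, a, ha, hbound⟩
  have hr3 : 0 < r3 := by linarith
  set q := r1 ^ a * r3 ^ (1 - a)
  have hq : 0 < q := by positivity
  have hgrowth : Tendsto (fun n : ℕ => (r2 / q) ^ n) atTop atTop :=
    tendsto_pow_atTop_atTop_of_one_lt ((one_lt_div hq).2 (rpow_mul_rpow_one_sub_lt h1 h2 h3 ha))
  obtain ⟨n, hn, hCn⟩ := ((eventually_ge_atTop 1).and (hgrowth.eventually_gt_atTop C)).exists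
  obtain ⟨k, rfl⟩ : ∃ k, n = k + 1 := Nat.exists_eq_add_of_le' hn
  have hnorms := hbound (k + 1) hn
  simp only [Nat.add_sub_cancel] at hnorms
  rw [integral_norm_pow_sq_ball_rpow_half h1.le,
    integral_norm_pow_sq_ball_rpow_half (h1.trans h2).le,
    integral_norm_pow_sq_ball_rpow_half hr3.le, mul_assoc,
    rpow_mul_pow_mul_rpow_one_sub (by positivity) h1.le hr3.le, mul_left_comm] at hnorms
  have hpow : r2 ^ (k + 1) ≤ C * q ^ (k + 1) :=
    le_of_mul_le_mul_left hnorms (by positivity)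
  rw [div_pow, lt_div_iff₀ (by positivity)] at hCn
  linarith
end
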